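/- arXiv:1210.1066 — 5 statements merged into one kernel-verified Lean document; each statement's English description precedes it below -/
import Mathlib

section
/- Let μ be an atomless probability measure on ℝ, let θ₀ ∈ ℝ and let 0 < α < 1. Then the decision 0 strictly minimizes the posterior expected loss under L₁, i.e. ∫ L₁(θ, 0) dμ(θ) < ∫ L₁(θ, 1) dμ(θ) and ∫ L₁(θ, 0) dμ(θ) < ∫ L₁(θ, -1) dμ(θ), if and only if α/2 < μ({θ : θ < θ₀}) and α/2 < μ({θ : θ > θ₀}). -/
open MeasureTheory

/-- The three-decision loss `L₁`: decision `i ∈ {-1, 0, 1}` with null value `θ₀` and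
level `α`. -/
noncomputable def L1 (θ₀ α θ : ℝ) (i : ℤ) : ℝ :=
  if (θ < θ₀ ∧ i = -1) ∨ (θ = θ₀ ∧ i = 0) ∨ (θ₀ < θ ∧ i = 1) then 0
  else if i = 0 then α / 2
  else 1

theorem bayes_decision_zero_iff (μ : Measure ℝ) [IsProbabilityMeasure μ] [NullSingletonClass μ]
    (θ₀ α : ℝ) (hα0 : 0 < α) (hα1 : α < 1) :
    ((∫ θ, L1 θ₀ α θ 0 ∂μ) < (∫ θ, L1 θ₀ α θ 1 ∂μ) ∧
      (∫ θ, L1 θ₀ α θ 0 ∂μ) < (∫ θ, L1 θ₀ α θ (-1) ∂μ)) ↔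
    (α / 2 < (μ {θ : ℝ | θ < θ₀}).toReal ∧ α / 2 < (μ {θ : ℝ | θ₀ < θ}).toReal) := by
  have hne : ∀ᵐ θ ∂μ, θ ≠ θ₀ := by
    rw [ae_iff]
    simpa using measure_singleton (μ := μ) θ₀
  have h0 : (∫ θ, L1 θ₀ α θ 0 ∂μ) = α / 2 := by
    have : (fun θ => L1 θ₀ α θ 0) =ᵐ[μ] fun _ => α / 2 := by
      filter_upwards [hne] with θ hθ
      simp [L1, hθ, lt_irrefl]
    rw [integral_congr_ae this, integral_const]
    simp
  have h1 : (∫ θ, L1 θ₀ α θ 1 ∂μ) = (μ (Set.Iic θ₀)).toReal := by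
    have hfun : (fun θ => L1 θ₀ α θ 1) = (Set.Iic θ₀).indicator (fun _ => (1:ℝ)) := by
      funext θ
      by_cases h : θ₀ < θ
      · simp [L1, h, Set.indicator, not_le.mpr h]
      · have h' : θ ≤ θ₀ := not_lt.mp h
        have hc1 : ¬ ((1:ℤ) = -1) := by decide
        simp [L1, h, Set.indicator, h', hc1]
    rw [hfun]
    exact integral_indicator_one (μ := μ) measurableSet_Iic
  have hm1 : (∫ θ, L1 θ₀ α θ (-1) ∂μ) = (μ (Set.Ici θ₀)).toReal := by
    have hfun : (fun θ => L1 θ₀ α θ (-1)) = (Set.Ici θ₀).indicator (fun _ => (1:ℝ)) := by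
      funext θ
      by_cases h : θ < θ₀
      · simp [L1, h, Set.indicator, not_le.mpr h]
      · have h' : θ₀ ≤ θ := not_lt.mp h
        have hne' : ¬ (θ = θ₀ ∧ (-1:ℤ) = 0) := by simp
        simp [L1, h, Set.indicator, h', hne']
    rw [hfun]
    exact integral_indicator_one (μ := μ) measurableSet_Ici
  have e1 : μ (Set.Iic θ₀) = μ {θ : ℝ | θ < θ₀} := by
    have : μ (Set.Iic θ₀) = μ (Set.Iio θ₀) := (measure_congr (Iio_ae_eq_Iic (a := θ₀))).symm
    simpa [Set.Iio] using this
  have e2 : μ (Set.Ici θ₀) = μ {θ : ℝ | θ₀ < θ} := by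
    have : μ (Set.Ici θ₀) = μ (Set.Ioi θ₀) := (measure_congr (Ioi_ae_eq_Ici (a := θ₀))).symm
    simpa [Set.Ioi] using this
  rw [h0, h1, hm1, e1, e2]
end

section
/- (Theorem 1.) Let μ be a probability measure on ℝ that is absolutely continuous with respect to Lebesgue measure and satisfies μ((a, b)) > 0 for all real a < b. Let θ₀ ∈ ℝ, let 0 < α < 1, and let q_p := sInf {t : ℝ | μ((-∞, t]) ≥ p}. Then the decision 0 strictly minimizes the posterior expected loss under the three-decision loss L₁, i.e. ∫ L₁(θ, 0) dμ(θ) < ∫ L₁(θ, 1) dμ(θ) and ∫ L₁(θ, 0) dμ(θ) < ∫ L₁(θ, -1) dμ(θ), if and only if θ₀ lies in the central 1−α credible interval, i.e. q_{α/2} < θ₀ < q_{1−α/2}. -/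
open MeasureTheory

/-- The `p`-th quantile of a measure `μ` on `ℝ`. -/
noncomputable def qtl (μ : Measure ℝ) (p : ℝ) : ℝ :=
  sInf {t : ℝ | p ≤ (μ (Set.Iic t)).toReal}

open Set

section aux

variable (μ : Measure ℝ) [IsProbabilityMeasure μ]

/-- The CDF is monotone. -/
lemma F_mono : Monotone (fun t : ℝ => (μ (Iic t)).toReal) := fun a b h =>
  ENNReal.toReal_mono (measure_ne_top μ _) (measure_mono (Iic_subset_Iic.2 h))

/-- The CDF is strictly monotone under the positivity assumption. -/
lemma F_strictMono (hpos : ∀ a b : ℝ, a < b → 0 < μ (Set.Ioo a b)) :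
    StrictMono (fun t : ℝ => (μ (Iic t)).toReal) := by
  intro a b hab
  have hsplit : μ (Iic b) = μ (Iic a) + μ (Ioc a b) := by
    rw [← Iic_union_Ioc_eq_Iic hab.le,
      measure_union (Iic_disjoint_Ioc le_rfl) measurableSet_Ioc]
  have hIoc : 0 < μ (Ioc a b) := lt_of_lt_of_le (hpos a b hab) (measure_mono Ioo_subset_Ioc_self)
  simp only
  rw [hsplit, ENNReal.toReal_add (measure_ne_top μ _) (measure_ne_top μ _)]
  have : 0 < (μ (Ioc a b)).toReal := ENNReal.toReal_pos hIoc.ne' (measure_ne_top μ _)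
  linarith

/-- For `p < 1`, some `t` has CDF at least `p`. -/
lemma F_exists_ge {p : ℝ} (hp : p < 1) : ∃ t : ℝ, p ≤ (μ (Iic t)).toReal := by
  have h1 : Filter.Tendsto (fun t : ℝ => (μ (Iic t)).toReal) Filter.atTop (nhds 1) := by
    have := tendsto_measure_Iic_atTop μ
    rw [measure_univ] at this
    have h2 := (ENNReal.tendsto_toReal (by norm_num : (1 : ENNReal) ≠ ⊤)).comp this
    simpa [Function.comp_def] using h2
  obtain ⟨t, ht⟩ := (h1.eventually (eventually_gt_nhds hp)).exists
  exact ⟨t, ht.le⟩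

/-- For `p > 0`, some `t` has CDF below `p`. -/
lemma F_exists_lt {p : ℝ} (hp : 0 < p) : ∃ t : ℝ, (μ (Iic t)).toReal < p := by
  have hiInter : (⋂ n : ℕ, Iic (-(n : ℝ))) = (∅ : Set ℝ) := by
    ext x
    simp only [mem_iInter, mem_Iic, mem_empty_iff_false, iff_false, not_forall, not_le]
    obtain ⟨n, hn⟩ := exists_nat_gt (-x)
    exact ⟨n, by linarith⟩
  have h0 : Filter.Tendsto (fun n : ℕ => μ (Iic (-(n : ℝ)))) Filter.atTop (nhds 0) := by
    have := tendsto_measure_iInter_atTop (μ := μ) (s := fun n : ℕ => Iic (-(n : ℝ)))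
      (fun n => measurableSet_Iic.nullMeasurableSet)
      (fun m n hmn => Iic_subset_Iic.2 (by exact_mod_cast neg_le_neg (by exact_mod_cast hmn)))
      ⟨0, measure_ne_top μ _⟩
    rw [hiInter] at this
    simpa [Function.comp_def] using this
  have hp' : (0 : ENNReal) < ENNReal.ofReal p := ENNReal.ofReal_pos.2 hp
  obtain ⟨n, hn⟩ := (h0.eventually (eventually_lt_nhds hp')).exists
  refine ⟨-(n : ℝ), ?_⟩
  exact (ENNReal.lt_ofReal_iff_toReal_lt (measure_ne_top μ _)).1 hn

/-- Left-approximation: if `p < F θ₀` then some `t < θ₀` has `p ≤ F t`. -/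
lemma F_left_approx (hac : μ ≪ volume) {p θ₀ : ℝ} (hp0 : 0 ≤ p) (h : p < (μ (Iic θ₀)).toReal) :
    ∃ t : ℝ, t < θ₀ ∧ p ≤ (μ (Iic t)).toReal := by
  by_contra hcon
  push_neg at hcon
  have hsing : μ {θ₀} = 0 := hac (Real.volume_singleton)
  have hIio : μ (Iio θ₀) = μ (Iic θ₀) := measure_congr (Iio_ae_eq_Iic' hsing)
  have hmono : Monotone (fun n : ℕ => Iic (θ₀ - 1 / ((n : ℝ) + 1))) := by
    intro m n hmn
    apply Iic_subset_Iic.2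
    have h1 : (m : ℝ) + 1 ≤ (n : ℝ) + 1 := by exact_mod_cast Nat.succ_le_succ hmn
    have h2 : (0 : ℝ) < (m : ℝ) + 1 := by positivity
    have := one_div_le_one_div_of_le h2 h1
    linarith
  have hUnion : (⋃ n : ℕ, Iic (θ₀ - 1 / ((n : ℝ) + 1))) = Iio θ₀ := by
    ext x
    simp only [mem_iUnion, mem_Iic, mem_Iio]
    constructor
    · rintro ⟨n, hn⟩
      have : (0 : ℝ) < 1 / ((n : ℝ) + 1) := by positivity
      linarith
    · intro hx
      obtain ⟨n, hn⟩ := exists_nat_gt (1 / (θ₀ - x))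
      refine ⟨n, ?_⟩
      have hpos' : (0 : ℝ) < θ₀ - x := by linarith
      have hn1 : (1 / (θ₀ - x) : ℝ) < (n : ℝ) + 1 := by
        have : (n : ℝ) ≤ (n : ℝ) + 1 := by linarith
        linarith
      have : 1 / ((n : ℝ) + 1) < θ₀ - x := by
        rw [div_lt_iff₀ (by positivity)]
        rw [div_lt_iff₀ hpos'] at hn1
        linarith [mul_comm (θ₀ - x) ((n : ℝ) + 1)]
      linarith
  have hle : μ (Iio θ₀) ≤ ENNReal.ofReal p := by
    rw [← hUnion, hmono.measure_iUnion]
    apply iSup_le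
    intro n
    have hn : θ₀ - 1 / ((n : ℝ) + 1) < θ₀ := by
      have : (0 : ℝ) < 1 / ((n : ℝ) + 1) := by positivity
      linarith
    have hlt := hcon _ hn
    exact (ENNReal.le_ofReal_iff_toReal_le (measure_ne_top μ _)
      (le_of_lt (lt_of_le_of_lt ENNReal.toReal_nonneg hlt))).2 hlt.le
  rw [hIio] at hle
  have hfin : (μ (Iic θ₀)).toReal ≤ p := by
    have h2 := ENNReal.toReal_mono ENNReal.ofReal_ne_top hle
    rwa [ENNReal.toReal_ofReal hp0] at h2
  linarith

/-- Right-approximation: if `F θ₀ < p` then some `t > θ₀` has `F t < p`. -/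
lemma F_right_approx {p θ₀ : ℝ} (h : (μ (Iic θ₀)).toReal < p) :
    ∃ t : ℝ, θ₀ < t ∧ (μ (Iic t)).toReal < p := by
  by_contra hcon
  push_neg at hcon
  have hanti : Antitone (fun n : ℕ => Iic (θ₀ + 1 / ((n : ℝ) + 1))) := by
    intro m n hmn
    apply Iic_subset_Iic.2
    have h1 : (m : ℝ) + 1 ≤ (n : ℝ) + 1 := by exact_mod_cast Nat.succ_le_succ hmn
    have h2 : (0 : ℝ) < (m : ℝ) + 1 := by positivity
    have := one_div_le_one_div_of_le h2 h1
    linarith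
  have hInter : (⋂ n : ℕ, Iic (θ₀ + 1 / ((n : ℝ) + 1))) = Iic θ₀ := by
    ext x
    simp only [mem_iInter, mem_Iic]
    constructor
    · intro hx
      by_contra hlt
      push_neg at hlt
      obtain ⟨n, hn⟩ := exists_nat_gt (1 / (x - θ₀))
      have hpos' : (0 : ℝ) < x - θ₀ := by linarith
      have hn1 : (1 / (x - θ₀) : ℝ) < (n : ℝ) + 1 := by
        have : (n : ℝ) ≤ (n : ℝ) + 1 := by linarith
        linarith
      have hsmall : 1 / ((n : ℝ) + 1) < x - θ₀ := by
        rw [div_lt_iff₀ (by positivity)]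
        rw [div_lt_iff₀ hpos'] at hn1
        linarith [mul_comm (x - θ₀) ((n : ℝ) + 1)]
      have := hx n
      linarith
    · intro hx n
      have : (0 : ℝ) < 1 / ((n : ℝ) + 1) := by positivity
      linarith
  have htend := tendsto_measure_iInter_atTop (μ := μ)
    (s := fun n : ℕ => Iic (θ₀ + 1 / ((n : ℝ) + 1)))
    (fun n => measurableSet_Iic.nullMeasurableSet) hanti ⟨0, measure_ne_top μ _⟩
  rw [hInter] at htend
  have hge : ENNReal.ofReal p ≤ μ (Iic θ₀) := by
    refine ge_of_tendsto htend (Filter.Eventually.of_forall fun n => ?_)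
    have hn : θ₀ < θ₀ + 1 / ((n : ℝ) + 1) := by
      have : (0 : ℝ) < 1 / ((n : ℝ) + 1) := by positivity
      linarith
    exact (ENNReal.ofReal_le_iff_le_toReal (measure_ne_top μ _)).2 (hcon _ hn)
  have hfin : p ≤ (μ (Iic θ₀)).toReal := by
    have h2 := ENNReal.toReal_mono (measure_ne_top μ _) hge
    rwa [ENNReal.toReal_ofReal (le_trans ENNReal.toReal_nonneg h.le)] at h2
  linarith

/-- Characterization: `qtl μ p < θ₀ ↔ p < F θ₀`. -/
lemma qtl_lt_iff (hac : μ ≪ volume) (hpos : ∀ a b : ℝ, a < b → 0 < μ (Set.Ioo a b))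
    {p θ₀ : ℝ} (hp0 : 0 < p) (hp1 : p < 1) :
    qtl μ p < θ₀ ↔ p < (μ (Iic θ₀)).toReal := by
  have hne : {t : ℝ | p ≤ (μ (Set.Iic t)).toReal}.Nonempty := F_exists_ge μ hp1
  obtain ⟨t₀, ht₀⟩ := F_exists_lt μ hp0
  have hbdd : BddBelow {t : ℝ | p ≤ (μ (Set.Iic t)).toReal} := by
    refine ⟨t₀, fun s hs => ?_⟩
    by_contra hlt
    push_neg at hlt
    exact absurd (le_trans hs (F_mono μ hlt.le)) (not_le.2 ht₀)
  constructor
  · intro h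
    obtain ⟨s, hs, hst⟩ := (csInf_lt_iff hbdd hne).1 h
    exact lt_of_le_of_lt hs (F_strictMono μ hpos hst)
  · intro h
    obtain ⟨t, ht, hpt⟩ := F_left_approx μ hac hp0.le h
    exact lt_of_le_of_lt (csInf_le hbdd hpt) ht

/-- Characterization: `θ₀ < qtl μ p ↔ F θ₀ < p`. -/
lemma lt_qtl_iff (hpos : ∀ a b : ℝ, a < b → 0 < μ (Set.Ioo a b))
    {p θ₀ : ℝ} (hp0 : 0 < p) (hp1 : p < 1) :
    θ₀ < qtl μ p ↔ (μ (Iic θ₀)).toReal < p := by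
  have hne : {t : ℝ | p ≤ (μ (Set.Iic t)).toReal}.Nonempty := F_exists_ge μ hp1
  obtain ⟨t₀, ht₀⟩ := F_exists_lt μ hp0
  have hbdd : BddBelow {t : ℝ | p ≤ (μ (Set.Iic t)).toReal} := by
    refine ⟨t₀, fun s hs => ?_⟩
    by_contra hlt
    push_neg at hlt
    exact absurd (le_trans hs (F_mono μ hlt.le)) (not_le.2 ht₀)
  constructor
  · intro h
    by_contra hle
    push_neg at hle
    exact absurd (csInf_le hbdd hle) (not_le.2 h)
  · intro h
    obtain ⟨t, ht, hpt⟩ := F_right_approx μ h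
    refine lt_of_lt_of_le ht (le_csInf hne fun s hs => ?_)
    by_contra hlt
    push_neg at hlt
    exact absurd (le_trans hs (F_mono μ hlt.le)) (not_le.2 hpt)

end aux

/-- Theorem 1: the Bayes decision under `L₁` is to accept the point-null hypothesis
`θ = θ₀` exactly when `θ₀` lies in the central `1 - α` credible interval. -/
theorem accept_iff_in_central_interval (μ : Measure ℝ) [IsProbabilityMeasure μ]
    (hac : μ ≪ volume) (hpos : ∀ a b : ℝ, a < b → 0 < μ (Set.Ioo a b))
    (θ₀ α : ℝ) (hα0 : 0 < α) (hα1 : α < 1) :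
    ((∫ θ, L1 θ₀ α θ 0 ∂μ) < (∫ θ, L1 θ₀ α θ 1 ∂μ) ∧
      (∫ θ, L1 θ₀ α θ 0 ∂μ) < (∫ θ, L1 θ₀ α θ (-1) ∂μ)) ↔
    (qtl μ (α / 2) < θ₀ ∧ θ₀ < qtl μ (1 - α / 2)) := by
  have hsing : μ {θ₀} = 0 := hac (Real.volume_singleton)
  have hae_ne : ∀ᵐ θ ∂μ, θ ≠ θ₀ := by
    rw [Filter.eventually_iff, mem_ae_iff]
    convert hsing using 2
    ext x
    simp
  -- integral of decision 0 is α/2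
  have h0 : (∫ θ, L1 θ₀ α θ 0 ∂μ) = α / 2 := by
    have hae : (fun θ => L1 θ₀ α θ 0) =ᵐ[μ] (fun _ => α / 2) := by
      filter_upwards [hae_ne] with θ hθ
      simp [L1, hθ, lt_irrefl]
    rw [integral_congr_ae hae, integral_const]
    simp
  -- integral of decision 1 is F θ₀
  have h1 : (∫ θ, L1 θ₀ α θ 1 ∂μ) = (μ (Set.Iic θ₀)).toReal := by
    have heq : (fun θ => L1 θ₀ α θ 1) = (Set.Iic θ₀).indicator (fun _ => (1 : ℝ)) := by
      funext θ
      rcases lt_or_ge θ₀ θ with h | h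
      · simp [L1, h, Set.indicator_of_notMem, Set.mem_Iic, not_le.2 h]
      · have h1' : ¬ θ₀ < θ := not_lt.2 h
        simp [L1, h1', Set.indicator_of_mem, Set.mem_Iic.2 h]
    rw [heq, integral_indicator_const _ measurableSet_Iic]
    simp [measureReal_def]
  -- integral of decision -1 is 1 - F θ₀
  have hm1 : (∫ θ, L1 θ₀ α θ (-1) ∂μ) = 1 - (μ (Set.Iic θ₀)).toReal := by
    have heq : (fun θ => L1 θ₀ α θ (-1)) = (Set.Ici θ₀).indicator (fun _ => (1 : ℝ)) := by
      funext θ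
      rcases lt_or_ge θ θ₀ with h | h
      · simp [L1, h, Set.indicator_of_notMem, Set.mem_Ici, not_le.2 h]
      · have h1' : ¬ θ < θ₀ := not_lt.2 h
        simp [L1, h1', Set.indicator_of_mem, Set.mem_Ici.2 h]
    rw [heq, integral_indicator_const _ measurableSet_Ici]
    have hIci : μ (Set.Ici θ₀) = μ (Set.Ioi θ₀) :=
      (measure_congr (Ioi_ae_eq_Ici' hsing)).symm
    have hsum : (μ (Set.Iic θ₀)).toReal + (μ (Set.Ioi θ₀)).toReal = 1 := by
      rw [← ENNReal.toReal_add (measure_ne_top μ _) (measure_ne_top μ _),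
        ← measure_union (Set.Iic_disjoint_Ioi le_rfl) measurableSet_Ioi,
        Set.Iic_union_Ioi, measure_univ, ENNReal.toReal_one]
    rw [measureReal_def, hIci]
    simp only [smul_eq_mul, mul_one]
    linarith
  rw [h0, h1, hm1]
  have hA : α / 2 < 1 := by linarith
  have hA0 : 0 < α / 2 := by linarith
  have hB0 : 0 < 1 - α / 2 := by linarith
  have hB1 : 1 - α / 2 < 1 := by linarith
  rw [qtl_lt_iff μ hac hpos hA0 hA, lt_qtl_iff μ hpos hB0 hB1]
  constructor
  · rintro ⟨h₁, h₂⟩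
    exact ⟨h₁, by linarith⟩
  · rintro ⟨h₁, h₂⟩
    exact ⟨h₁, by linarith⟩
end

section
/- Let μ be a probability measure on ℝ having a continuous density f with respect to Lebesgue measure such that f is symmetric about m ∈ ℝ (f(2m − θ) = f(θ) for all θ) and f is strictly decreasing on [m, ∞). Let 0 < α < 1 and let q_p := sInf {t : ℝ | μ((-∞, t]) ≥ p}. Then the 1−α highest posterior density set equals the 1−α central credible interval: {θ : ℝ | f(θ) > f(q_{α/2})} = (q_{α/2}, q_{1−α/2}). -/
open MeasureTheory

/-- For a continuous, symmetric and strictly unimodal density, the `1 - α` HPD set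
coincides with the `1 - α` central credible interval. -/
theorem hpd_eq_central_interval (μ : Measure ℝ) [IsProbabilityMeasure μ]
    (f : ℝ → ℝ) (hf0 : ∀ θ, 0 ≤ f θ) (hfc : Continuous f)
    (hμ : μ = volume.withDensity (fun θ => ENNReal.ofReal (f θ)))
    (m : ℝ) (hsym : ∀ θ, f (2 * m - θ) = f θ)
    (hmono : StrictAntiOn f (Set.Ici m))
    (α : ℝ) (hα0 : 0 < α) (hα1 : α < 1) :
    {θ : ℝ | f (qtl μ (α / 2)) < f θ} =
      Set.Ioo (qtl μ (α / 2)) (qtl μ (1 - α / 2)) := by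
  -- positivity of the density
  have hpos : ∀ θ, 0 < f θ := by
    have key : ∀ θ, m ≤ θ → 0 < f θ := by
      intro θ hθ
      rcases lt_or_eq_of_le (hf0 θ) with h | h
      · exact h
      · exfalso
        have h2 := hmono hθ (le_trans hθ (le_of_lt (lt_add_one θ))) (lt_add_one θ)
        nlinarith [hf0 (θ + 1)]
    intro θ
    rcases le_total m θ with h | h
    · exact key θ h
    · rw [← hsym θ]; exact key _ (by linarith)
  have hm : Measurable fun θ => ENNReal.ofReal (f θ) :=
    ENNReal.measurable_ofReal.comp hfc.measurable
  have happ : ∀ s : Set ℝ, MeasurableSet s → μ s = ∫⁻ x in s, ENNReal.ofReal (f x) := by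
    intro s hs; rw [hμ, withDensity_apply _ hs]
  have huniv : μ Set.univ = 1 := measure_univ
  -- the CDF
  set F : ℝ → ℝ := fun t => (μ (Set.Iic t)).toReal with hF
  have hfin : ∀ s : Set ℝ, μ s ≠ ⊤ := fun s => measure_ne_top μ s
  -- no atoms
  have hatom : ∀ t : ℝ, μ {t} = 0 := by
    intro t
    rw [happ _ (measurableSet_singleton t),
      Measure.restrict_eq_zero.mpr Real.volume_singleton, lintegral_zero_measure]
  have hdisj : ∀ s t : ℝ, Disjoint (Set.Iic s) (Set.Ioc s t) := fun s t =>
    Set.disjoint_left.mpr fun x hx1 hx2 => absurd hx2.1 (not_lt.mpr hx1)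
  -- F is strictly monotone
  have hFmono : StrictMono F := by
    intro s t hst
    have hsplit : μ (Set.Iic t) = μ (Set.Iic s) + μ (Set.Ioc s t) := by
      rw [← Set.Iic_union_Ioc_eq_Iic hst.le]
      exact measure_union (hdisj s t) measurableSet_Ioc
    have hposm : μ (Set.Ioc s t) ≠ 0 := by
      rw [hμ]
      intro h
      rw [withDensity_apply_eq_zero hm] at h
      have : ({x | ENNReal.ofReal (f x) ≠ 0} ∩ Set.Ioc s t) = Set.Ioc s t := by
        apply Set.inter_eq_right.mpr
        intro x _
        simp only [Set.mem_setOf_eq, ne_eq, ENNReal.ofReal_eq_zero, not_le]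
        exact hpos x
      rw [this, Real.volume_Ioc] at h
      simp only [ENNReal.ofReal_eq_zero] at h
      linarith
    have hlt : μ (Set.Iic s) < μ (Set.Iic t) := by
      rw [hsplit]; exact ENNReal.lt_add_right (hfin _) hposm
    exact (ENNReal.toReal_lt_toReal (hfin _) (hfin _)).mpr hlt
  -- f is integrable
  have hintegr : Integrable f volume := by
    constructor
    · exact hfc.aestronglyMeasurable
    · rw [hasFiniteIntegral_iff_ofReal (Filter.Eventually.of_forall hf0)]
      have : ∫⁻ x, ENNReal.ofReal (f x) = μ Set.univ := by
        rw [happ _ MeasurableSet.univ, Measure.restrict_univ]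
      rw [this, huniv]; exact ENNReal.one_lt_top
  -- F in terms of integrals
  have hFint : ∀ t : ℝ, F t = ∫ x in Set.Iic t, f x := by
    intro t
    show (μ (Set.Iic t)).toReal = _
    rw [happ _ measurableSet_Iic]
    rw [integral_eq_lintegral_of_nonneg_ae (Filter.Eventually.of_forall hf0)
      hfc.aestronglyMeasurable]
  -- F is continuous
  have hadd : ∀ s t : ℝ, s ≤ t → F t = F s + ∫ x in Set.Ioc s t, f x := by
    intro s t h
    rw [hFint, hFint, ← setIntegral_union (hdisj s t)
      measurableSet_Ioc hintegr.integrableOn hintegr.integrableOn,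
      Set.Iic_union_Ioc_eq_Iic h]
  have hFcont : Continuous F := by
    have hprim : Continuous fun t => ∫ x in (0:ℝ)..t, f x :=
      hintegr.continuous_primitive 0
    have heq : F = fun t => F 0 + ∫ x in (0:ℝ)..t, f x := by
      funext t
      rcases le_total 0 t with h | h
      · rw [intervalIntegral.integral_of_le h]
        exact hadd 0 t h
      · rw [intervalIntegral.integral_of_ge h]
        have := hadd t 0 h
        linarith
    rw [heq]
    exact continuous_const.add hprim
  -- F tends to 1 at +infinity
  have hFtop : Filter.Tendsto F Filter.atTop (nhds 1) := by
    have h1 := tendsto_measure_Iic_atTop μ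
    rw [huniv] at h1
    have := (ENNReal.tendsto_toReal (by norm_num : (1:ENNReal) ≠ ⊤)).comp h1
    simp only [ENNReal.toReal_one] at this
    exact this
  -- symmetry of the CDF
  have hFsym : ∀ t : ℝ, F (2 * m - t) = 1 - F t := by
    intro t
    have hmp : MeasurePreserving (fun x : ℝ => 2 * m - x) volume volume :=
      Measure.measurePreserving_sub_left volume (2 * m)
    have hIci : μ (Set.Iic (2 * m - t)) = μ (Set.Ici t) := by
      rw [happ _ measurableSet_Iic, happ _ measurableSet_Ici,
        ← lintegral_indicator measurableSet_Iic _, ← lintegral_indicator measurableSet_Ici _]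
      rw [← hmp.lintegral_comp (Measurable.indicator hm measurableSet_Iic)]
      congr 1
      funext x
      by_cases hx : t ≤ x
      · rw [Set.indicator_of_mem (by simp; linarith : (2*m - x) ∈ Set.Iic (2*m - t)),
          Set.indicator_of_mem (by simpa : x ∈ Set.Ici t)]
        rw [hsym]
      · rw [Set.indicator_of_notMem (by simp only [Set.mem_Iic, not_le]; push_neg at hx; linarith : ¬(2*m - x) ∈ Set.Iic (2*m - t)),
          Set.indicator_of_notMem (by simpa using hx : ¬ x ∈ Set.Ici t)]
    have hsum : μ (Set.Iic (2 * m - t)) + μ (Set.Iic t) = 1 := by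
      rw [hIci]
      have h1 : μ (Set.Iic t) = μ (Set.Iio t) + μ {t} := by
        rw [← measure_union (Set.disjoint_singleton_right.mpr (by simp) : Disjoint (Set.Iio t) {t})
          (measurableSet_singleton t), Set.Iio_union_right]
      rw [h1, hatom, add_zero, add_comm, ← measure_union
        (by simp [Set.disjoint_left] : Disjoint (Set.Iio t) (Set.Ici t)) measurableSet_Ici,
        Set.Iio_union_Ici, huniv]
    have := congrArg ENNReal.toReal hsum
    rw [ENNReal.toReal_add (hfin _) (hfin _)] at this
    simp only [ENNReal.toReal_one] at this
    simp only [hF] at this ⊢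
    linarith
  -- F m = 1/2
  have hFm : F m = 1 / 2 := by
    have := hFsym m
    have h2 : 2 * m - m = m := by ring
    rw [h2] at this
    linarith
  -- quantile characterization
  have hq : ∀ p t : ℝ, F t = p → qtl μ p = t := by
    intro p t ht
    have : {s : ℝ | p ≤ (μ (Set.Iic s)).toReal} = Set.Ici t := by
      ext s
      simp only [Set.mem_setOf_eq, Set.mem_Ici]
      rw [← ht]
      exact ⟨fun h => hFmono.le_iff_le.mp h, fun h => hFmono.le_iff_le.mpr h⟩
    rw [qtl, this, csInf_Ici]
  -- existence of quantile points via IVT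
  have hex : ∀ p : ℝ, 0 < p → p < 1 → ∃ t, F t = p := by
    intro p hp0 hp1
    obtain ⟨t1, ht1⟩ := (hFtop.eventually_const_lt (by apply max_lt <;> linarith : max p (1 - p) < 1)).exists
    have htp : p < F t1 := lt_of_le_of_lt (le_max_left _ _) ht1
    have ht0 : F (2 * m - t1) < p := by
      rw [hFsym]
      have : 1 - p < F t1 := lt_of_le_of_lt (le_max_right _ _) ht1
      linarith
    have := intermediate_value_univ (2 * m - t1) t1 hFcont
    exact this ⟨ht0.le, htp.le⟩
  -- the two quantiles
  obtain ⟨a, ha⟩ := hex (α / 2) (by linarith) (by linarith)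
  have hb : F (2 * m - a) = 1 - α / 2 := by rw [hFsym, ha]
  have hqa : qtl μ (α / 2) = a := hq _ _ ha
  have hqb : qtl μ (1 - α / 2) = 2 * m - a := hq _ _ hb
  have ham : a < m := by
    have : F a < F m := by rw [ha, hFm]; linarith
    exact hFmono.lt_iff_lt.mp this
  set b := 2 * m - a with hbdef
  have hmb : m < b := by rw [hbdef]; linarith
  have hfab : f a = f b := by rw [hbdef, hsym]
  rw [hqa, hqb]
  -- final set identity
  ext θ
  simp only [Set.mem_setOf_eq, Set.mem_Ioo]
  constructor
  · intro h
    constructor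
    · by_contra hc
      push_neg at hc
      have h1 : b ≤ 2 * m - θ := by rw [hbdef]; linarith
      rcases eq_or_lt_of_le hc with he | hlt
      · rw [he] at h; exact lt_irrefl _ h
      · have hth : f (2 * m - θ) < f (2 * m - a) :=
          hmono (by simp only [Set.mem_Ici]; linarith) (by simp only [Set.mem_Ici]; linarith)
            (by linarith)
        rw [hsym, hsym] at hth
        exact absurd h (by linarith)
    · by_contra hc
      push_neg at hc
      rcases eq_or_lt_of_le hc with he | hlt
      · rw [← he, ← hfab] at h; exact lt_irrefl _ h
      · have hth : f θ < f b :=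
          hmono (by simp only [Set.mem_Ici]; linarith) (by simp only [Set.mem_Ici]; linarith) hlt
        rw [← hfab] at hth
        exact absurd h (by linarith)
  · rintro ⟨h1, h2⟩
    rcases le_total θ m with hθ | hθ
    · have hth : f (2 * m - a) < f (2 * m - θ) :=
        hmono (by simp only [Set.mem_Ici]; linarith) (by simp only [Set.mem_Ici]; linarith)
          (by linarith)
      rw [hsym, hsym] at hth
      linarith
    · have hth : f b < f θ :=
        hmono (by simp only [Set.mem_Ici]; linarith) (by simp only [Set.mem_Ici]; linarith) h2
      rw [← hfab] at hth
      exact hth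
end

section
/- (Corollary to Theorem 1.) Let μ be a probability measure on ℝ having a continuous density f with respect to Lebesgue measure such that f is symmetric about m ∈ ℝ (f(2m − θ) = f(θ) for all θ) and strictly decreasing on [m, ∞). Let θ₀ ∈ ℝ, 0 < α < 1, and q_p := sInf {t : ℝ | μ((-∞, t]) ≥ p}. Then the decision 0 strictly minimizes the posterior expected loss under the three-decision loss L₁, i.e. ∫ L₁(θ, 0) dμ(θ) < ∫ L₁(θ, 1) dμ(θ) and ∫ L₁(θ, 0) dμ(θ) < ∫ L₁(θ, -1) dμ(θ), if and only if θ₀ belongs to the 1−α HPD set, i.e. f(θ₀) > f(q_{α/2}). -/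
open MeasureTheory

/-- Corollary to Theorem 1: for a continuous, symmetric, strictly unimodal posterior
density, the Bayes decision under `L₁` is to accept the point-null hypothesis `θ = θ₀`
exactly when `θ₀` lies in the `1 - α` HPD set. -/
theorem accept_iff_in_hpd (μ : Measure ℝ) [IsProbabilityMeasure μ]
    (f : ℝ → ℝ) (hf0 : ∀ θ, 0 ≤ f θ) (hfc : Continuous f)
    (hμ : μ = volume.withDensity (fun θ => ENNReal.ofReal (f θ)))
    (m : ℝ) (hsym : ∀ θ, f (2 * m - θ) = f θ)
    (hmono : StrictAntiOn f (Set.Ici m))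
    (θ₀ α : ℝ) (hα0 : 0 < α) (hα1 : α < 1) :
    ((∫ θ, L1 θ₀ α θ 0 ∂μ) < (∫ θ, L1 θ₀ α θ 1 ∂μ) ∧
      (∫ θ, L1 θ₀ α θ 0 ∂μ) < (∫ θ, L1 θ₀ α θ (-1) ∂μ)) ↔
    f (qtl μ (α / 2)) < f θ₀ := by
  have hfm : Measurable f := hfc.measurable
  haveI : NoAtoms μ := ⟨fun x => by
    rw [hμ]; exact (withDensity_absolutelyContinuous volume _) (measure_singleton x)⟩
  -- positivity of f
  have hfpos : ∀ x, 0 < f x := by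
    have h1 : ∀ x, m ≤ x → 0 < f x := fun x hx =>
      lt_of_le_of_lt (hf0 (x + 1)) (hmono hx (le_trans hx (by linarith)) (by linarith))
    intro x
    rcases le_or_gt m x with h | h
    · exact h1 x h
    · rw [← hsym x]; exact h1 _ (by linarith)
  -- μ univ = 1 as a lintegral
  have hμu : (∫⁻ x, ENNReal.ofReal (f x)) = 1 := by
    have := measure_univ (μ := μ)
    rw [hμ, withDensity_apply _ MeasurableSet.univ, Measure.restrict_univ] at this
    exact this
  -- integrability of f
  have hInt : Integrable f := by
    refine ⟨hfc.aestronglyMeasurable, ?_⟩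
    rw [hasFiniteIntegral_iff_ofReal (Filter.Eventually.of_forall hf0), hμu]
    exact ENNReal.one_lt_top
  -- measure via integral
  have hμs : ∀ s : Set ℝ, MeasurableSet s → (μ s).toReal = ∫ x in s, f x := by
    intro s hs
    rw [hμ, withDensity_apply _ hs,
      ← ofReal_integral_eq_lintegral_ofReal hInt.integrableOn
        (Filter.Eventually.of_forall hf0),
      ENNReal.toReal_ofReal (integral_nonneg hf0)]
  set F : ℝ → ℝ := fun t => (μ (Set.Iic t)).toReal with hF
  have hFeq : ∀ t, F t = ∫ x in Set.Iic t, f x := fun t => hμs _ measurableSet_Iic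
  have htotal : (∫ x, f x) = 1 := by
    have := hμs Set.univ MeasurableSet.univ
    rw [measure_univ, Measure.restrict_univ] at this
    simp at this
    exact this.symm
  -- strict monotonicity of F
  have hFmono : StrictMono F := by
    intro a b hab
    have h1 : F b - F a = ∫ x in a..b, f x := by
      rw [hFeq, hFeq]
      exact (intervalIntegral.integral_Iic_sub_Iic hInt.integrableOn hInt.integrableOn)
    have h2 : 0 < ∫ x in a..b, f x :=
      intervalIntegral.intervalIntegral_pos_of_pos_on hInt.intervalIntegrable
        (fun x _ => hfpos x) hab
    linarith [h1 ▸ h2]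
  -- continuity of F
  have hFcont : Continuous F := by
    have h1 : ∀ t, F t = F 0 + ∫ x in (0:ℝ)..t, f x := by
      intro t
      rw [hFeq, hFeq]
      have := intervalIntegral.integral_Iic_sub_Iic (f := f) (μ := volume) (a := 0) (b := t)
        hInt.integrableOn hInt.integrableOn
      linarith
    have : F = fun t => F 0 + ∫ x in (0:ℝ)..t, f x := funext h1
    rw [this]
    exact continuous_const.add
      (intervalIntegral.continuous_primitive (fun a b => hInt.intervalIntegrable) 0)
  -- symmetry of F
  have hIci : ∀ t, (μ (Set.Ici t)).toReal = 1 - F t := by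
    intro t
    rw [hμs _ measurableSet_Ici, hFeq, integral_Ici_eq_integral_Ioi]
    have := integral_add_compl (measurableSet_Iic (a := t)) hInt
    rw [Set.compl_Iic] at this
    linarith [htotal ▸ this]
  have hFsym : ∀ t, F (2 * m - t) = 1 - F t := by
    intro t
    have hmp : MeasurePreserving (fun x : ℝ => 2 * m - x) volume volume :=
      Measure.measurePreserving_sub_left volume (2 * m)
    have hpre : (fun x : ℝ => 2 * m - x) ⁻¹' Set.Iic (2 * m - t) = Set.Ici t := by
      ext x
      simp only [Set.mem_preimage, Set.mem_Iic, Set.mem_Ici]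
      constructor <;> intro h <;> linarith
    have h1 : μ (Set.Iic (2 * m - t)) = μ (Set.Ici t) := by
      rw [hμ, withDensity_apply _ measurableSet_Iic, withDensity_apply _ measurableSet_Ici,
        ← hmp.setLIntegral_comp_preimage (f := fun x => ENNReal.ofReal (f x))
          measurableSet_Iic hfm.ennreal_ofReal, hpre]
      refine setLIntegral_congr_fun measurableSet_Ici
        (fun x _ => ?_)
      rw [hsym]
    rw [hF]
    simp only [h1]
    exact hIci t
  -- F m = 1/2 and limits
  have hFm : F m = 1 / 2 := by
    have h := hFsym m
    rw [show 2 * m - m = m by ring] at h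
    linarith
  have hα2 : 0 < α / 2 := by linarith
  have hα2' : α / 2 < 1 / 2 := by linarith
  -- existence of a point where F exceeds 1 - α/2
  have htop : Filter.Tendsto F Filter.atTop (nhds 1) := by
    have h1 := tendsto_measure_Iic_atTop (μ := μ)
    rw [measure_univ] at h1
    have h2 := (ENNReal.tendsto_toReal (ENNReal.one_ne_top)).comp h1
    exact (by simpa using h2 : Filter.Tendsto (ENNReal.toReal ∘ fun x => μ (Set.Iic x)) Filter.atTop (nhds 1))
  obtain ⟨b, hb⟩ := (htop.eventually (eventually_gt_nhds (by linarith : 1 - α / 2 < 1))).exists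
  have ha : F (2 * m - b) < α / 2 := by rw [hFsym]; linarith
  -- quantile
  set q := qtl μ (α / 2) with hqdef
  have hab : 2 * m - b < b := hFmono.lt_iff_lt.mp (by linarith)
  obtain ⟨t₀, ht₀mem, ht₀⟩ : ∃ t₀ ∈ Set.Icc (2 * m - b) b, F t₀ = α / 2 := by
    have := intermediate_value_Icc hab.le hFcont.continuousOn
    have hmem : α / 2 ∈ Set.Icc (F (2 * m - b)) (F b) := ⟨ha.le, by linarith⟩
    obtain ⟨t₀, ht₀m, ht₀⟩ := this hmem
    exact ⟨t₀, ht₀m, ht₀⟩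
  have hqt : q = t₀ := by
    have hset : {t : ℝ | α / 2 ≤ (μ (Set.Iic t)).toReal} = Set.Ici t₀ := by
      ext t
      simp only [Set.mem_setOf_eq, Set.mem_Ici]
      rw [show (μ (Set.Iic t)).toReal = F t from rfl, ← ht₀, hFmono.le_iff_le]
    rw [hqdef, qtl, hset, csInf_Ici]
  have hFq : F q = α / 2 := by rw [hqt, ht₀]
  have hqm : q < m := hFmono.lt_iff_lt.mp (by rw [hFq, hFm]; linarith)
  -- f strictly increasing on Iic m
  have hinc : StrictMonoOn f (Set.Iic m) := by
    intro x hx y hy hxy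
    rw [← hsym x, ← hsym y]
    exact hmono (by simp at hy ⊢; linarith) (by simp at hx ⊢; linarith) (by linarith)
  -- compute the integrals
  have hI0 : (∫ θ, L1 θ₀ α θ 0 ∂μ) = α / 2 := by
    have hae : ∀ᵐ θ ∂μ, θ ≠ θ₀ := by
      rw [MeasureTheory.ae_iff]
      simp only [not_not]
      simp only [Set.setOf_eq_eq_singleton]
      exact NullSingletonClass.measure_singleton (self := this) θ₀
    rw [integral_congr_ae (g := fun _ => α / 2) (hae.mono fun θ hθ => by
      simp [L1, hθ])]
    simp [measure_univ]
  have hI1 : (∫ θ, L1 θ₀ α θ 1 ∂μ) = F θ₀ := by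
    have h1 : (fun θ => L1 θ₀ α θ 1) = Set.indicator (Set.Iic θ₀) (fun _ => (1:ℝ)) := by
      funext θ
      by_cases h : θ₀ < θ
      · simp [L1, Set.indicator_apply, h, not_le.mpr h]
      · simp [L1, Set.indicator_apply, h, not_lt.mp h]
    rw [h1, integral_indicator measurableSet_Iic, setIntegral_const]
    simp [hF]
    rfl
  have hIm1 : (∫ θ, L1 θ₀ α θ (-1) ∂μ) = 1 - F θ₀ := by
    have h1 : (fun θ => L1 θ₀ α θ (-1)) = Set.indicator (Set.Ici θ₀) (fun _ => (1:ℝ)) := by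
      funext θ
      by_cases h : θ < θ₀
      · simp [L1, Set.indicator_apply, h, not_le.mpr h]
      · simp [L1, Set.indicator_apply, h, not_lt.mp h]
    rw [h1, integral_indicator measurableSet_Ici, setIntegral_const, smul_eq_mul, mul_one,
      measureReal_def, hIci]
  rw [hI0, hI1, hIm1]
  constructor
  · rintro ⟨h1, h2⟩
    have hql : q < θ₀ := hFmono.lt_iff_lt.mp (by rw [hFq]; exact h1)
    have hqr : θ₀ < 2 * m - q := by
      apply hFmono.lt_iff_lt.mp
      rw [hFsym, hFq]; linarith
    rcases le_or_gt θ₀ m with h | h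
    · exact hinc hqm.le h hql
    · have : f (2 * m - q) < f θ₀ := hmono (by simp; linarith) (by simp; linarith) hqr
      rwa [hsym] at this
  · intro hlt
    have hql : q < θ₀ := by
      by_contra h
      push_neg at h
      have : f θ₀ ≤ f q := hinc.monotoneOn (by simp; linarith) (by simp [hqm.le]) h
      linarith
    have hqr : θ₀ < 2 * m - q := by
      by_contra h
      push_neg at h
      have h2 : f θ₀ ≤ f (2 * m - q) :=
        hmono.antitoneOn (by simp; linarith) (by simp; linarith) h
      rw [hsym] at h2
      linarith
    constructor
    · rw [← hFq]; exact hFmono hql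
    · have := hFmono hqr
      rw [hFsym, hFq] at this
      linarith
end

section
/- (Madruga–Esteves–Wechsler test.) Let μ be a probability measure on ℝ, let T ⊆ ℝ be a measurable set, and let a, b, c > 0. Consider the loss L_MEW defined by L_MEW(θ, 1) = a·(1 − 𝟙_T(θ)) and L_MEW(θ, 0) = b + c·𝟙_T(θ). Then the posterior expected loss of rejecting is strictly smaller than that of accepting, i.e. ∫ L_MEW(θ, 1) dμ(θ) < ∫ L_MEW(θ, 0) dμ(θ), if and only if μ(ℝ \ T) < (b + c)/(a + c). -/
open MeasureTheory

/-- The Madruga–Esteves–Wechsler test: under the loss `L_MEW(θ, 1) = a(1 - 𝟙_T(θ))`,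
`L_MEW(θ, 0) = b + c·𝟙_T(θ)`, rejecting has strictly smaller posterior expected loss
than accepting iff `μ(Tᶜ) < (b + c)/(a + c)`. -/
theorem mew_test (μ : Measure ℝ) [IsProbabilityMeasure μ]
    (T : Set ℝ) (hT : MeasurableSet T) (a b c : ℝ) (ha : 0 < a) (hb : 0 < b)
    (hc : 0 < c) :
    (∫ θ, a * (1 - Set.indicator T (fun _ => (1 : ℝ)) θ) ∂μ) <
      (∫ θ, b + c * Set.indicator T (fun _ => (1 : ℝ)) θ ∂μ) ↔
    (μ Tᶜ).toReal < (b + c) / (a + c) := by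
  have hTfin : μ T ≠ ⊤ := measure_ne_top μ T
  have hint : Integrable (Set.indicator T (fun _ => (1 : ℝ))) μ := by
    exact (integrable_indicator_iff hT).2 (integrableOn_const (measure_lt_top μ T).ne)
  have hi : (∫ θ, Set.indicator T (fun _ => (1 : ℝ)) θ ∂μ) = (μ T).toReal := by
    rw [integral_indicator hT]; simp; rfl
  have h1 : (∫ θ, a * (1 - Set.indicator T (fun _ => (1 : ℝ)) θ) ∂μ)
      = a * (1 - (μ T).toReal) := by
    rw [integral_const_mul, integral_sub (integrable_const 1) hint, hi]
    simp
  have h2 : (∫ θ, b + c * Set.indicator T (fun _ => (1 : ℝ)) θ ∂μ)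
      = b + c * (μ T).toReal := by
    rw [integral_add (integrable_const b) (hint.const_mul c), integral_const_mul, hi]
    simp
  have hcompl : (μ Tᶜ).toReal = 1 - (μ T).toReal := by
    have := prob_compl_eq_one_sub (μ := μ) hT
    rw [this, ENNReal.toReal_sub_of_le prob_le_one (by simp)]
    simp
  rw [h1, h2, hcompl]
  rw [lt_div_iff₀ (by linarith)]
  constructor <;> intro h <;> nlinarith [h]
end
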